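/- arXiv:1610.05093 — 2 statements merged into one kernel-verified Lean document; each statement's English description precedes it below -/
import Mathlib

section
/- Let G be a finite simple graph whose vertex labeling is a quasi-perfect ordering (QPO). Then (1) every cycle of G of length at least 5 has a chord (an edge of G between two non-consecutive vertices of the cycle); and (2) if in addition G contains no 3-cycles, then G is bipartite. -/
/-- The vertex labeling of `G` is a *quasi-perfect ordering* (QPO): for every
candidate path `a, c, b, v₁, …, vₘ` (`m ≥ 1`, `a < b < c`, and `vₘ = d` is the only
`vᵢ` smaller than `c`), either `ad` is an edge of `G`, or else `d < b` and `cd` is an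
edge of `G`. -/
def IsQPO {n : ℕ} (G : SimpleGraph (Fin n)) : Prop :=
  ∀ (a c b d : Fin n) (vs : List (Fin n)),
    vs ≠ [] → vs.getLast? = some d →
    List.Chain' G.Adj (a :: c :: b :: vs) →
    (a :: c :: b :: vs).Nodup →
    a < b → b < c → d < c → (∀ v ∈ vs.dropLast, c < v) →
    (G.Adj a d ∨ (d < b ∧ G.Adj c d))

/-! A cycle of length at least 5 has a chord: if its largest vertex `M` has cycle neighbours
`a < b` and `d` is the other neighbour of `b`, then `a, M, b, d` is a candidate path, and the QPO
property supplies the edge `ad` or `Md`. A shortest odd closed walk is a chordless cycle, since a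
repeated vertex or a chord would split it into two shorter closed walks, one of them odd. In a
triangle-free QPO graph such a cycle has length neither 3 nor at least 5, so every closed walk is
even and the graph is bipartite. -/

namespace SimpleGraph.Walk

variable {V : Type*} {G : SimpleGraph V}

theorem exists_eq_append_append_of_not_isPath [DecidableEq V] {u v : V} (p : G.Walk u v)
    (hp : ¬p.IsPath) :
    ∃ (x : V) (p₁ : G.Walk u x) (c : G.Walk x x) (p₂ : G.Walk x v),
      ¬c.Nil ∧ p = p₁.append (c.append p₂) := by
  induction p with
  | nil => exact absurd IsPath.nil hp
  | @cons u w v h q ih =>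
    by_cases hu : u ∈ q.support
    · exact ⟨u, nil, cons h (q.takeUntil u hu), q.dropUntil u hu, not_nil_cons,
        by simp [take_spec]⟩
    · obtain ⟨x, p₁, c, p₂, hc, rfl⟩ := ih (by simpa [cons_isPath_iff, hu] using hp)
      exact ⟨x, cons h p₁, c, p₂, hc, rfl⟩

theorem two_le_length_of_not_mem_edges {u v : V} (p : G.Walk u v) (huv : u ≠ v)
    (h : s(u, v) ∉ p.edges) : 2 ≤ p.length := by
  rcases p with _ | ⟨_, _ | ⟨_, _⟩⟩
  · exact absurd rfl huv
  · simp at h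
  · simp

theorem exists_closed_walks_of_adj_of_not_mem_edges [DecidableEq V] {u x y : V} (c : G.Walk u u)
    (hx : x ∈ c.support) (hy : y ∈ c.support) (hxy : G.Adj x y) (hne : s(x, y) ∉ c.edges) :
    ∃ (c₁ : G.Walk x x) (c₂ : G.Walk y y),
      c₁.length + c₂.length = c.length + 2 ∧ 3 ≤ c₁.length ∧ 3 ≤ c₂.length := by
  set r := c.rotate x hx
  have hy' : y ∈ r.support := (mem_support_rotate_iff c x hx).2 hy
  have hr : s(x, y) ∉ r.edges := fun h => hne ((rotate_edges c x hx).perm.mem_iff.1 h)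
  have hsplit := congrArg length (r.take_spec hy')
  rw [length_append, length_rotate] at hsplit
  have ht := (r.takeUntil y hy').two_le_length_of_not_mem_edges hxy.ne
    fun h => hr (edges_takeUntil_subset_edges r hy' h)
  have hd := (r.dropUntil y hy').two_le_length_of_not_mem_edges hxy.ne.symm
    fun h => hr (Sym2.eq_swap ▸ edges_dropUntil_subset_edges r hy' h)
  exact ⟨(r.takeUntil y hy').concat hxy.symm, (r.dropUntil y hy').concat hxy,
    by simp only [length_concat]; omega, by simp only [length_concat]; omega,
    by simp only [length_concat]; omega⟩

theorem three_le_length_of_odd {u : V} (w : G.Walk u u) (hw : Odd w.length) : 3 ≤ w.length := by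
  rcases w with _ | ⟨h, _ | ⟨_, _⟩⟩
  · simp at hw
  · exact (h.ne rfl).elim
  · grind [length_cons]

theorem exists_isCycle_isChordless_odd_of_odd_length {u : V} (w : G.Walk u u)
    (hw : Odd w.length) :
    ∃ (v : V) (c : G.Walk v v), c.IsCycle ∧ c.IsChordless ∧ Odd c.length := by
  classical
  induction hl : w.length using Nat.strong_induction_on generalizing u with
  | _ ℓ ih =>
  subst hl
  have h3 := w.three_le_length_of_odd hw
  have hnil : ¬w.Nil := by rw [not_nil_iff_lt_length]; omega
  by_cases hpath : w.tail.IsPath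
  swap
  · obtain ⟨x, p₁, c, p₂, hc, hsplit⟩ := w.tail.exists_eq_append_append_of_not_isPath hpath
    have hlen := congrArg length hsplit
    rw [length_append, length_append, length_tail] at hlen
    have hc0 : 0 < c.length := not_nil_iff_lt_length.1 hc
    rcases Nat.even_or_odd c.length with hce | hco
    · have hshort : (cons (w.adj_snd hnil) (p₁.append p₂)).length =
          p₁.length + p₂.length + 1 := by
        rw [length_cons, length_append]
      exact ih _ (by omega) (cons (w.adj_snd hnil) (p₁.append p₂)) (by grind) rfl
    · exact ih _ (by omega) c hco rfl
  have hcyc : w.IsCycle := isCycle_iff_isPath_tail_and_le_length.2 ⟨hpath, h3⟩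
  by_cases hcl : w.IsChordless
  · exact ⟨u, w, hcyc, hcl, hw⟩
  simp only [isChordless_iff_forall_mem_edges, not_forall] at hcl
  obtain ⟨x, y, hx, hy, hxy, hne⟩ := hcl
  obtain ⟨c₁, c₂, hlen, h₁, h₂⟩ :=
    w.exists_closed_walks_of_adj_of_not_mem_edges hx hy hxy hne
  rcases Nat.even_or_odd c₁.length with hce | hco
  · exact ih _ (by omega) c₂ (by grind) rfl
  · exact ih _ (by omega) c₁ hco rfl


theorem IsChordless.reverse {u v : V} {p : G.Walk u v} (hp : p.IsChordless) :
    p.reverse.IsChordless := by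
  simpa [isChordless_iff_forall_mem_edges] using hp

theorem IsChordless.rotate [DecidableEq V] {u v : V} {c : G.Walk v v} (hc : c.IsChordless)
    (h : u ∈ c.support) : (c.rotate u h).IsChordless := by
  rw [isChordless_iff_forall_mem_edges] at hc ⊢
  intro x y hx hy hxy
  rw [(rotate_edges c u h).perm.mem_iff]
  exact hc (by simpa using hx) (by simpa using hy) hxy

end SimpleGraph.Walk

open SimpleGraph Walk

namespace IsQPO

variable {n : ℕ} {G : SimpleGraph (Fin n)}

theorem not_isChordless_of_penultimate_lt_snd (hG : IsQPO G) {M : Fin n} {q : G.Walk M M}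
    (hq : q.IsCycle) (h5 : 5 ≤ q.length) (hmax : ∀ v ∈ q.support, v ≤ M)
    (hlt : q.penultimate < q.snd) : ¬q.IsChordless := by
  set k := q.length
  have hne : ∀ i j, i ≤ k - 1 → j ≤ k - 1 → i ≠ j → q.getVert i ≠ q.getVert j :=
    fun i j hi hj hij h => hij (hq.getVert_injOn' hi hj h)
  have hM : q.getVert 0 = M := q.getVert_zero
  have hMk : q.getVert k = M := q.getVert_length
  have hlt_M : ∀ i, 1 ≤ i → i ≤ k - 1 → q.getVert i < M := fun i h1 h2 =>
    (hmax _ (q.getVert_mem_support i)).lt_of_ne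
      fun h => hne i 0 h2 (by omega) (by omega) (h.trans hM.symm)
  have hneM : ∀ i, 1 ≤ i → i ≤ k - 1 → q.getVert i ≠ M :=
    fun i h1 h2 => (hlt_M i h1 h2).ne
  set a := q.penultimate
  set b := q.snd
  set d := q.getVert 2
  have hnil : ¬q.Nil := hq.not_nil
  have hchain : List.IsChain G.Adj [a, M, b, d] := by
    simp only [List.isChain_cons_cons, List.isChain_singleton, and_true]
    exact ⟨adj_penultimate hnil, adj_snd hnil, q.adj_getVert_succ (by omega)⟩
  have hnodup : [a, M, b, d].Nodup := by
    simp only [List.nodup_cons, List.mem_cons, List.not_mem_nil, or_false, not_or,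
      not_false_eq_true, List.nodup_nil, and_true]
    exact ⟨⟨hneM _ (by omega) le_rfl, hne _ _ le_rfl (by omega) (by omega),
      hne _ _ le_rfl (by omega) (by omega)⟩, ⟨(hneM _ le_rfl (by omega)).symm,
      (hneM _ (by omega) (by omega)).symm⟩, hne _ _ (by omega) (by omega) (by omega)⟩
  rw [isChordless_iff_forall_mem_edges]
  intro hcl
  rcases hG a M b d [d] (by simp) rfl hchain hnodup hlt (hlt_M 1 le_rfl (by omega))
    (hlt_M 2 (by omega) (by omega)) (by simp) with had | ⟨-, hMd⟩
  · have := hcl (q.getVert_mem_support _) (q.getVert_mem_support _) had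
    rw [← adj_toSubgraph_iff_mem_edges] at this
    have : d ∈ q.toSubgraph.neighborSet a := this
    rw [hq.neighborSet_toSubgraph_internal (by omega) (by omega)] at this
    rcases this with h | h
    · exact hne 2 (k - 1 - 1) (by omega) (by omega) (by omega) h
    · rw [show k - 1 + 1 = k by omega, hMk] at h
      exact hneM 2 (by omega) (by omega) h
  · have := hcl q.start_mem_support (q.getVert_mem_support _) hMd
    rw [← adj_toSubgraph_iff_mem_edges] at this
    have : d ∈ q.toSubgraph.neighborSet M := this
    rw [hq.neighborSet_toSubgraph_endpoint] at this
    rcases this with h | h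
    · exact hne 2 1 (by omega) (by omega) (by omega) h
    · exact hne 2 (k - 1) (by omega) le_rfl (by omega) h

theorem not_isChordless (hG : IsQPO G) {v : Fin n} {c : G.Walk v v} (hc : c.IsCycle)
    (h5 : 5 ≤ c.length) : ¬c.IsChordless := by
  intro hcl
  obtain ⟨M, hM, hmax⟩ := c.support.toFinset.exists_max_image id ⟨v, by simp⟩
  rw [List.mem_toFinset] at hM
  set q := c.rotate M hM
  have hq : q.IsCycle := hc.rotate hM
  have hqmax : ∀ x ∈ q.support, x ≤ M := fun x hx =>
    hmax x (List.mem_toFinset.2 ((mem_support_rotate_iff c M hM).1 hx))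
  have hq5 : 5 ≤ q.length := by rw [length_rotate]; exact h5
  rcases lt_or_gt_of_ne hq.snd_ne_penultimate with hlt | hlt
  · exact hG.not_isChordless_of_penultimate_lt_snd hq.reverse (by rwa [length_reverse])
      (by simpa using hqmax) (by rwa [snd_reverse, penultimate_reverse]) (hcl.rotate hM).reverse
  · exact hG.not_isChordless_of_penultimate_lt_snd hq hq5 hqmax hlt (hcl.rotate hM)

end IsQPO

theorem stmt_16 {n : ℕ} (G : SimpleGraph (Fin n)) (hqpo : IsQPO G) :
    (∀ (v : Fin n) (c : G.Walk v v), c.IsCycle → 5 ≤ c.length →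
        ∃ u w, u ∈ c.support ∧ w ∈ c.support ∧ G.Adj u w ∧ s(u, w) ∉ c.edges) ∧
    ((∀ i j k : Fin n, G.Adj i j → G.Adj j k → G.Adj i k → False) →
      G.Colorable 2) := by
  refine ⟨fun v c hc h5 => ?_, fun htri => ?_⟩
  · simpa [isChordless_iff_forall_mem_edges] using hqpo.not_isChordless hc h5
  rw [two_colorable_iff_forall_loop_even]
  intro u w
  by_contra hodd
  obtain ⟨v, c, hc, hcl, hco⟩ :=
    w.exists_isCycle_isChordless_odd_of_odd_length (Nat.not_even_iff_odd.1 hodd)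
  rcases hc.three_le_length.eq_or_lt with h3 | h4
  · obtain ⟨s, hs⟩ := is3Clique_iff_exists_cycle_length_three.2 ⟨v, c, hc, h3.symm⟩
    obtain ⟨a, b, d, hab, had, hbd, -⟩ := is3Clique_iff.1 hs
    exact htri a b d hab hbd had
  · exact hqpo.not_isChordless hc (by grind) hcl
end

section
/- Let G be a finite simple graph with n vertices. There exists a bijective labeling of the vertices of G by [n] = {1,...,n} together with nonnegative integers a_1,...,a_n such that, in ℤ[t], ∑_{m≥0} tf_m(G) · t^{n−m} = ∏_{i=1}^{n} (t + a_i) (where tf_m(G) is computed with respect to that labeling), if and only if G is a forest (acyclic). -/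
/-!
Comparing coefficients, `∑ tf_m t^(n-m) = ∏ (t + a_i)` says that `tf_m` is the `m`-th
elementary symmetric function `e_m(a)`. Any set of at most two edges is a tight forest, so with
`E` the number of edges, `e_1(a) = E` and `e_2(a) = C(E, 2)`. Since
`(∑ a_i)^2 = 2 e_2(a) + ∑ a_i^2`, this forces every `a_i ∈ {0, 1}`, hence `tf_m = C(E, m)` for
all `m ≤ n`: every set of at most `n` edges is a tight forest, while the edges of a cycle do not
even form a forest.

Conversely, label a forest by increasing depth below a root chosen in each component. A vertex
has at most one neighbour of smaller depth, so along a path the depth never rises and then falls;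
a path starting at a root of a spanning subforest therefore climbs, and its labels increase.
Hence every edge set is a tight forest, `tf_m = C(E, m)`, and the polynomial is
`t^(n-E) (t+1)^E`.
-/

open Polynomial Classical

/-- A list of elements of a linear order is *tight* if it contains no three-term
subsequence order-isomorphic to 231, 312 or 321. -/
def TightList {α : Type*} [LinearOrder α] (l : List α) : Prop :=
  ∀ a b c : α, [a, b, c].Sublist l →
    ¬(c < a ∧ a < b) ∧ ¬(b < c ∧ c < a) ∧ ¬(c < b ∧ b < a)

/-- A simple graph on a linearly ordered vertex type is a *tight forest*. -/
def IsTightForest {V : Type*} [LinearOrder V] (F : SimpleGraph V) : Prop :=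
  F.IsAcyclic ∧ ∀ (r v : V), (∀ w, F.Reachable r w → r ≤ w) →
    ∀ p : F.Walk r v, p.IsPath → TightList p.support

/-- `F` is a tight spanning forest of `G`. -/
def IsTSF {n : ℕ} (G : SimpleGraph (Fin n)) (F : Finset (Sym2 (Fin n))) : Prop :=
  (F : Set (Sym2 (Fin n))) ⊆ G.edgeSet ∧
    IsTightForest (SimpleGraph.fromEdgeSet (F : Set (Sym2 (Fin n))))

/-- The number of tight spanning forests of `G` with `m` edges. -/
noncomputable def tf {n : ℕ} (G : SimpleGraph (Fin n)) (m : ℕ) : ℕ :=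
  ((Finset.univ : Finset (Finset (Sym2 (Fin n)))).filter
    (fun F => IsTSF G F ∧ F.card = m)).card

open Finset

section TightList

variable {α : Type*} [LinearOrder α] {l : List α}

/-- The patterns 231, 312 and 321 are exactly those whose first entry is not the smallest. -/
theorem tightList_of_forall_sublist (h : ∀ a b c, [a, b, c].Sublist l → a < b ∧ a < c) :
    TightList l := by
  intro a b c habc
  obtain ⟨hab, hac⟩ := h a b c habc
  exact ⟨by order, by order, by order⟩

theorem tightList_of_pairwise_lt (hl : l.Pairwise (· < ·)) : TightList l :=
  tightList_of_forall_sublist fun a b c habc => by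
    have := hl.sublist habc
    simp_all

theorem tightList_cons_of_length_le_two {a : α} (hl : l.length ≤ 2) (ha : ∀ x ∈ l, a < x) :
    TightList (a :: l) :=
  tightList_of_forall_sublist fun x y z hxyz => by
    have hlen := hxyz.length_le
    obtain ⟨rfl, hl⟩ := List.cons_eq_cons.mp (hxyz.eq_of_length (by simp at hlen ⊢; omega))
    exact ⟨ha y (by simp [← hl]), ha z (by simp [← hl])⟩

end TightList

namespace SimpleGraph

variable {V W : Type*} {G H : SimpleGraph V}

theorem dist_lt_of_mem_support {r u v : V} {p : G.Walk r v} (hp : p.length = G.dist r v)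
    (hu : u ∈ p.support) (huv : u ≠ v) : G.dist r u < G.dist r v :=
  (dist_le _).trans_lt (hp ▸ p.length_takeUntil_lt_length hu huv)

theorem IsAcyclic.mem_support_of_adj_of_dist_lt (hG : G.IsAcyclic) {r u w : V}
    {p : G.Walk r w} (hp : p.IsPath) (huw : G.Adj u w)
    (hlt : G.dist r u < G.dist r w) : u ∈ p.support := by
  obtain ⟨q, hq, hql⟩ := (p.reachable.trans huw.symm.reachable).exists_path_of_dist
  refine hG.mem_support_of_ne_mem_support_of_adj_of_isPath hp hq huw.symm fun hw => ?_
  exact (dist_lt_of_mem_support hql hw huw.ne').not_gt hlt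

theorem IsAcyclic.eq_of_adj_of_dist_lt (hG : G.IsAcyclic) {r u v w : V} (hr : G.Reachable r w)
    (hu : G.Adj u w) (hv : G.Adj v w) (hdu : G.dist r u < G.dist r w)
    (hdv : G.dist r v < G.dist r w) : u = v := by
  obtain ⟨p, hp⟩ := hr.exists_isPath
  rw [hG.eq_penultimate_of_adj_end hp hu.symm (hG.mem_support_of_adj_of_dist_lt hp hu hdu),
    hG.eq_penultimate_of_adj_end hp hv.symm (hG.mem_support_of_adj_of_dist_lt hp hv hdv)]

/-- Modelled on the depth function of a rooted forest (`IsAcyclic.exists_isLeveling`). -/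
structure IsLeveling (G : SimpleGraph V) (d : V → ℕ) : Prop where
  ne_of_adj : ∀ ⦃u v⦄, G.Adj u v → d u ≠ d v
  eq_of_adj_of_lt : ∀ ⦃u v w⦄, G.Adj u w → G.Adj v w → d u < d w → d v < d w → u = v

theorem IsAcyclic.exists_isLeveling (hG : G.IsAcyclic) : ∃ d : V → ℕ, G.IsLeveling d := by
  let root (v : V) : V := (G.connectedComponentMk v).out
  have hroot (v : V) : G.Reachable (root v) v := ConnectedComponent.exact (Quot.out_eq _)
  have hroot_adj {u v : V} (h : G.Adj u v) : root u = root v :=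
    congrArg Quot.out (ConnectedComponent.connectedComponentMk_eq_of_adj h)
  refine ⟨fun v => G.dist (root v) v, fun u v h => ?_, fun u v w hu hv hdu hdv => ?_⟩
  · show G.dist (root u) u ≠ G.dist (root v) v
    rw [← hroot_adj h]
    exact hG.dist_ne_of_adj h (hroot u)
  · simp only [hroot_adj hu, hroot_adj hv] at hdu hdv
    exact hG.eq_of_adj_of_dist_lt (hroot w) hu hv hdu hdv

namespace IsLeveling

variable {d : V → ℕ}

theorem anti (hle : H ≤ G) (hd : G.IsLeveling d) : H.IsLeveling d :=
  ⟨fun _ _ h => hd.ne_of_adj (hle h), fun _ _ _ hu hv => hd.eq_of_adj_of_lt (hle hu) (hle hv)⟩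

theorem comap {G : SimpleGraph W} {d : W → ℕ} (hd : G.IsLeveling d) {f : V → W}
    (hf : Function.Injective f) : (G.comap f).IsLeveling (d ∘ f) :=
  ⟨fun _ _ h => hd.ne_of_adj h,
    fun _ _ _ hu hv hdu hdv => hf (hd.eq_of_adj_of_lt hu hv hdu hdv)⟩

theorem map (hd : G.IsLeveling d) (e : V ≃ W) :
    (G.map e.toEmbedding).IsLeveling (d ∘ e.symm) := by
  rw [← comap_symm]
  exact hd.comap e.symm.injective

/-- Each edge is sent to its upper endpoint, which determines it. -/
theorem card_edgeFinset_le [Fintype V] [Fintype G.edgeSet] (hd : G.IsLeveling d) :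
    #G.edgeFinset ≤ Fintype.card V := by
  refine Finset.card_le_card_of_forall_subsingleton (fun e w => ∃ u, e = s(u, w) ∧ d u < d w)
    (fun e he => ?_) fun w _ => ?_
  · induction e using Sym2.ind with
    | _ u v =>
      have huv : G.Adj u v := by simpa using he
      rcases (hd.ne_of_adj huv).lt_or_gt with h | h
      · exact ⟨v, Finset.mem_univ _, u, rfl, h⟩
      · exact ⟨u, Finset.mem_univ _, v, Sym2.eq_swap, h⟩
  · rintro e₁ ⟨he₁, u₁, rfl, h₁⟩ e₂ ⟨he₂, u₂, rfl, h₂⟩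
    simp only [mem_edgeFinset, mem_edgeSet] at he₁ he₂
    rw [hd.eq_of_adj_of_lt he₁ he₂ h₁ h₂]

theorem isChain_support (hd : G.IsLeveling d) {u v w : V} (h : G.Adj u v) (hlt : d u < d v)
    (p : G.Walk v w) (hp : (p.cons h).IsPath) :
    (p.cons h).support.IsChain (fun a b => d a < d b) := by
  induction p generalizing u with
  | nil => simpa using hlt
  | @cons v x w h' q ih =>
    have hpath := (Walk.cons_isPath_iff _ _).mp hp
    have hvx : d v < d x := by
      refine lt_of_le_of_ne (not_lt.mp fun hxv => hpath.2 ?_) (hd.ne_of_adj h')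
      rw [hd.eq_of_adj_of_lt h h'.symm hlt hxv]
      simp
    simp only [Walk.support_cons, List.isChain_cons_cons] at ih ⊢
    exact ⟨hlt, ih h' hvx hpath.1⟩

theorem isTightForest [LinearOrder V] (hG : G.IsAcyclic) (hd : G.IsLeveling d)
    (hmono : ∀ ⦃u v⦄, d u < d v → u < v) : IsTightForest G := by
  refine ⟨hG, fun r v hr p hp => tightList_of_pairwise_lt ?_⟩
  cases p with
  | nil => simp
  | cons h q =>
    have hlt : d r < d _ := lt_of_le_of_ne
      (not_lt.mp fun h' => (hr _ h.reachable).not_gt (hmono h')) (hd.ne_of_adj h)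
    exact List.isChain_iff_pairwise.mp ((hd.isChain_support h hlt q hp).imp hmono)

end IsLeveling

end SimpleGraph

theorem exists_equiv_fin_lt_of_lt {V α : Type*} [Fintype V] [LinearOrder α] {n : ℕ}
    (hcard : Fintype.card V = n) (f : V → α) :
    ∃ ℓ : V ≃ Fin n, ∀ ⦃u v⦄, f u < f v → ℓ u < ℓ v := by
  let e := Fintype.equivFinOfCardEq hcard
  let _ : LinearOrder V := LinearOrder.lift' (fun v => toLex (f v, e v))
    fun u v huv => e.injective (congrArg (fun p => (ofLex p).2) huv)
  exact ⟨(Fintype.orderIsoFinOfCardEq V hcard).symm.toEquiv, fun u v huv =>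
    (Fintype.orderIsoFinOfCardEq V hcard).symm.lt_iff_lt.mpr (Prod.Lex.left _ _ huv)⟩

theorem SimpleGraph.IsAcyclic.exists_equiv_isLeveling {V : Type*} [Fintype V]
    {G : SimpleGraph V} {n : ℕ} (hG : G.IsAcyclic) (hcard : Fintype.card V = n) :
    ∃ (ℓ : V ≃ Fin n) (d : Fin n → ℕ),
      (G.map ℓ.toEmbedding).IsLeveling d ∧ ∀ ⦃u v⦄, d u < d v → u < v := by
  obtain ⟨d, hd⟩ := hG.exists_isLeveling
  obtain ⟨ℓ, hℓ⟩ := exists_equiv_fin_lt_of_lt hcard d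
  exact ⟨ℓ, d ∘ ℓ.symm, hd.map ℓ, fun u v huv => by simpa using hℓ huv⟩

section TightSpanningForest

open SimpleGraph

variable {n : ℕ} {H : SimpleGraph (Fin n)} {F : Finset (Sym2 (Fin n))}

theorem isTSF_of_isLeveling {d : Fin n → ℕ} (hH : H.IsAcyclic) (hd : H.IsLeveling d)
    (hmono : ∀ ⦃u v⦄, d u < d v → u < v) (hF : (F : Set (Sym2 (Fin n))) ⊆ H.edgeSet) :
    IsTSF H F := by
  have hle : fromEdgeSet (F : Set (Sym2 (Fin n))) ≤ H := by
    simpa using fromEdgeSet_mono (s := (F : Set (Sym2 (Fin n)))) hF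
  exact ⟨hF, (hd.anti hle).isTightForest (hH.anti hle) hmono⟩

theorem isTSF_of_card_le_two (hF : (F : Set (Sym2 (Fin n))) ⊆ H.edgeSet) (hcard : #F ≤ 2) :
    IsTSF H F := by
  have hlen {u v : Fin n} (p : (fromEdgeSet (F : Set (Sym2 (Fin n)))).Walk u v)
      (hp : p.IsTrail) : p.length ≤ 2 := by
    refine hp.length_le_card_edgeFinset.trans ((card_le_card fun e he => ?_).trans hcard)
    simp only [mem_edgeFinset, edgeSet_fromEdgeSet] at he
    exact he.1
  refine ⟨hF, fun v c hc => ?_, fun r v hr p hp => ?_⟩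
  · have := hlen c hc.isCircuit.isTrail
    have := hc.isCircuit.three_le_length
    omega
  · have hnodup := hp.support_nodup
    rw [← p.cons_tail_support] at hnodup ⊢
    refine tightList_cons_of_length_le_two ?_ fun x hx => lt_of_le_of_ne ?_ ?_
    · have := hlen p hp.isTrail
      simp only [List.length_tail, Walk.length_support]
      omega
    · exact hr x ⟨p.takeUntil x (List.mem_of_mem_tail hx)⟩
    · rintro rfl
      exact (List.nodup_cons.mp hnodup).1 hx

theorem isAcyclic_of_forall_isTSF [Fintype H.edgeSet]
    (h : ∀ F ⊆ H.edgeFinset, #F ≤ n → IsTSF H F) : H.IsAcyclic := by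
  intro v c hc
  have hlen : c.length ≤ n := by
    simpa using hc.support_nodup.length_le_card
  have hcard : #c.edges.toFinset = c.length := by
    rw [List.toFinset_card_of_nodup hc.isCircuit.isTrail.edges_nodup, Walk.length_edges]
  have hsub : c.edges.toFinset ⊆ H.edgeFinset := fun e he => by
    simpa using c.edges_subset_edgeSet (List.mem_toFinset.mp he)
  have hedges (e) (he : e ∈ c.edges) :
      e ∈ (fromEdgeSet (c.edges.toFinset : Set (Sym2 (Fin n)))).edgeSet := by
    simpa [he] using H.not_isDiag_of_mem_edgeSet (c.edges_subset_edgeSet he)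
  exact (h _ hsub (hcard ▸ hlen)).2.1 _ (hc.transfer hedges)

theorem tf_eq_choose_iff [Fintype H.edgeSet] {m : ℕ} :
    tf H m = (#H.edgeFinset).choose m ↔ ∀ F ⊆ H.edgeFinset, #F = m → IsTSF H F := by
  have hsub : univ.filter (fun F => IsTSF H F ∧ #F = m) ⊆ H.edgeFinset.powersetCard m :=
    fun F hF => by
      obtain ⟨-, ⟨hFH, -⟩, hFm⟩ := mem_filter.mp hF
      rw [← coe_edgeFinset, coe_subset] at hFH
      exact mem_powersetCard.mpr ⟨hFH, hFm⟩
  rw [tf, ← card_powersetCard]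
  refine ⟨fun h F hF hFm => ?_, fun h => congrArg card (subset_antisymm hsub fun F hF => ?_)⟩
  · have hF' : F ∈ H.edgeFinset.powersetCard m := mem_powersetCard.mpr ⟨hF, hFm⟩
    rw [← eq_of_subset_of_card_le hsub h.ge] at hF'
    exact (mem_filter.mp hF').2.1
  · obtain ⟨hFH, hFm⟩ := mem_powersetCard.mp hF
    exact mem_filter.mpr ⟨mem_univ _, h F hFH hFm, hFm⟩

end TightSpanningForest

section ElementarySymmetric

variable {ι R : Type*} [CommSemiring R] {s : Finset ι}

theorem sum_powersetCard_one_prod (f : ι → R) :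
    ∑ t ∈ s.powersetCard 1, ∏ i ∈ t, f i = ∑ i ∈ s, f i := by
  simp [powersetCard_one]

theorem sum_powersetCard_succ_insert_prod [DecidableEq ι] {x : ι} (hx : x ∉ s) (f : ι → R)
    (k : ℕ) :
    ∑ t ∈ (insert x s).powersetCard (k + 1), ∏ i ∈ t, f i =
      ∑ t ∈ s.powersetCard (k + 1), ∏ i ∈ t, f i +
        f x * ∑ t ∈ s.powersetCard k, ∏ i ∈ t, f i := by
  have hx' : ∀ t ∈ s.powersetCard k, x ∉ t := fun t ht hxt =>
    hx ((mem_powersetCard.mp ht).1 hxt)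
  rw [powersetCard_succ_insert hx, sum_union, sum_image, mul_sum]
  · exact congrArg _ (sum_congr rfl fun t ht => prod_insert (hx' t ht))
  · exact fun t ht u hu htu => by
      rw [← erase_insert (hx' t ht), ← erase_insert (hx' u hu), htu]
  · exact disjoint_left.mpr fun t ht hmem => by
      obtain ⟨u, -, rfl⟩ := mem_image.mp hmem
      exact hx ((mem_powersetCard.mp ht).1 (mem_insert_self x u))

theorem sq_sum_eq_two_mul_sum_powersetCard_two_add (f : ι → R) :
    (∑ i ∈ s, f i) ^ 2 =
      2 * ∑ t ∈ s.powersetCard 2, ∏ i ∈ t, f i + ∑ i ∈ s, f i ^ 2 := by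
  classical
  induction s using Finset.induction_on with
  | empty => simp [powersetCard_eq_empty.mpr (by simp : #(∅ : Finset ι) < 2)]
  | insert x s hx ih =>
    rw [sum_insert hx, sum_insert hx, sum_powersetCard_succ_insert_prod hx f 1,
      sum_powersetCard_one_prod, add_sq, ih]
    ring

theorem sum_powersetCard_prod_eq_choose {a : ι → ℕ} (ha : ∀ i ∈ s, a i ≤ 1) (m : ℕ) :
    ∑ t ∈ s.powersetCard m, ∏ i ∈ t, a i = (∑ i ∈ s, a i).choose m := by
  classical
  induction s using Finset.induction_on generalizing m with
  | empty => cases m <;> simp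
  | insert x s hx ih =>
    have ih := ih fun i hi => ha i (mem_insert_of_mem hi)
    cases m with
    | zero => simp
    | succ k =>
      rw [sum_powersetCard_succ_insert_prod hx, ih, ih, sum_insert hx]
      rcases Nat.le_one_iff_eq_zero_or_eq_one.mp (ha x (mem_insert_self x s)) with h | h
      · simp [h]
      · rw [h, one_mul, add_comm 1, Nat.choose_succ_succ', add_comm]

theorem Nat.two_mul_choose_two_add_self (n : ℕ) : 2 * n.choose 2 + n = n ^ 2 := by
  induction n with
  | zero => rfl
  | succ k ih =>
    rw [Nat.choose_succ_succ, Nat.choose_one_right]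
    nlinarith

theorem le_one_of_sum_powersetCard_two_prod_eq_choose {a : ι → ℕ}
    (h : ∑ t ∈ s.powersetCard 2, ∏ i ∈ t, a i = (∑ i ∈ s, a i).choose 2) :
    ∀ i ∈ s, a i ≤ 1 := by
  have hsq : ∑ i ∈ s, a i = ∑ i ∈ s, a i ^ 2 := by
    have key := sq_sum_eq_two_mul_sum_powersetCard_two_add (s := s) a
    rw [h, ← Nat.two_mul_choose_two_add_self] at key
    omega
  intro i hi
  have := ((sum_eq_sum_iff_of_le fun i _ => Nat.le_self_pow two_ne_zero (a i)).mp hsq i hi)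
  nlinarith

end ElementarySymmetric

section Polynomial

variable {ι R : Type*} [CommSemiring R]

theorem prod_X_add_C_eq_sum_powersetCard_prod (s : Finset ι) (r : ι → R) :
    ∏ i ∈ s, (X + C (r i)) =
      ∑ m ∈ range (#s + 1),
        C (∑ t ∈ s.powersetCard m, ∏ i ∈ t, r i) * X ^ (#s - m) := by
  simpa [Multiset.map_map, esymm_map_val] using Multiset.prod_X_add_C_eq_sum_esymm (s.val.map r)

theorem coeff_sum_C_mul_X_pow_sub (n : ℕ) (c : ℕ → R) {k : ℕ} (hk : k ≤ n) :
    (∑ m ∈ range (n + 1), C (c m) * X ^ (n - m)).coeff (n - k) = c k := by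
  simp only [finsetSum_coeff, coeff_C_mul_X_pow]
  rw [sum_eq_single_of_mem k (mem_range.mpr (by omega)) fun m hm hmk => if_neg (by grind)]
  simp

theorem sum_C_mul_X_pow_sub_inj {n : ℕ} {c c' : ℕ → R} :
    ∑ m ∈ range (n + 1), C (c m) * X ^ (n - m) =
        ∑ m ∈ range (n + 1), C (c' m) * X ^ (n - m) ↔
      ∀ m ≤ n, c m = c' m := by
  refine ⟨fun h m hm => ?_, fun h => sum_congr rfl fun m hm => ?_⟩
  · rw [← coeff_sum_C_mul_X_pow_sub n c hm, h, coeff_sum_C_mul_X_pow_sub n c' hm]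
  · rw [h m (Nat.lt_succ_iff.mp (mem_range.mp hm))]

theorem sum_natCast_mul_X_pow_sub_eq_prod_iff {n : ℕ} (c : ℕ → ℕ) (a : Fin n → ℕ) :
    ∑ m ∈ range (n + 1), (c m : ℤ[X]) * X ^ (n - m) = ∏ i, (X + C (a i : ℤ)) ↔
      ∀ m ≤ n, c m = ∑ t ∈ univ.powersetCard m, ∏ i ∈ t, a i := by
  rw [prod_X_add_C_eq_sum_powersetCard_prod, card_univ, Fintype.card_fin]
  simp_rw [← C_eq_natCast]
  rw [sum_C_mul_X_pow_sub_inj]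
  exact forall₂_congr fun m _ => by exact_mod_cast Iff.rfl

end Polynomial

section TightForestPolynomial

open SimpleGraph

variable {n : ℕ} {H : SimpleGraph (Fin n)}

theorem isAcyclic_of_sum_tf_eq_prod (a : Fin n → ℕ)
    (h : ∑ m ∈ range (n + 1), (tf H m : ℤ[X]) * X ^ (n - m) = ∏ i, (X + C (a i : ℤ))) :
    H.IsAcyclic := by
  rcases le_or_gt n 2 with hn | hn
  · exact IsAcyclic.of_card_le_two (by simpa using hn)
  rw [sum_natCast_mul_X_pow_sub_eq_prod_iff] at h
  have htf {m : ℕ} (hm : m ≤ 2) : tf H m = (#H.edgeFinset).choose m :=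
    tf_eq_choose_iff.mpr fun F hF hFm =>
      isTSF_of_card_le_two (by rwa [← coe_edgeFinset, coe_subset]) (hFm ▸ hm)
  have hsum : ∑ i, a i = #H.edgeFinset := by
    rw [← sum_powersetCard_one_prod, ← h 1 (by omega), htf (by norm_num), Nat.choose_one_right]
  have ha : ∀ i ∈ univ, a i ≤ 1 :=
    le_one_of_sum_powersetCard_two_prod_eq_choose (by rw [← h 2 (by omega), htf le_rfl, hsum])
  refine isAcyclic_of_forall_isTSF fun F hF hFn => tf_eq_choose_iff.mp ?_ F hF rfl
  rw [h _ hFn, sum_powersetCard_prod_eq_choose ha, hsum]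

theorem exists_sum_tf_eq_prod_of_forall_isTSF [Fintype H.edgeSet] (hE : #H.edgeFinset ≤ n)
    (h : ∀ F ⊆ H.edgeFinset, IsTSF H F) :
    ∃ a : Fin n → ℕ,
      ∑ m ∈ range (n + 1), (tf H m : ℤ[X]) * X ^ (n - m) = ∏ i, (X + C (a i : ℤ)) := by
  obtain ⟨O, -, hO⟩ := exists_subset_card_eq (s := (univ : Finset (Fin n))) (by simpa using hE)
  refine ⟨fun i => if i ∈ O then 1 else 0,
    (sum_natCast_mul_X_pow_sub_eq_prod_iff _ _).mpr fun m _ => ?_⟩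
  rw [sum_powersetCard_prod_eq_choose (fun i _ => by split_ifs <;> simp), sum_boole]
  simpa [hO] using tf_eq_choose_iff.mpr fun F hF _ => h F hF

end TightForestPolynomial

theorem stmt_19_general {V : Type*} [Fintype V] (n : ℕ)
    (hcard : Fintype.card V = n) (G : SimpleGraph V) :
    (∃ (ℓ : V ≃ Fin n) (a : Fin n → ℕ),
        ∑ m ∈ Finset.range (n + 1),
            (tf (G.map ℓ.toEmbedding) m : Polynomial ℤ) * X ^ (n - m)
          = ∏ i : Fin n, (X + C ((a i : ℤ)))) ↔
      G.IsAcyclic := by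
  refine ⟨fun ⟨ℓ, a, h⟩ => (SimpleGraph.Iso.map ℓ G).isAcyclic_iff.mpr
    (isAcyclic_of_sum_tf_eq_prod a h), fun hG => ?_⟩
  obtain ⟨ℓ, d, hd, hmono⟩ := hG.exists_equiv_isLeveling hcard
  have hH := (SimpleGraph.Iso.map ℓ G).isAcyclic_iff.mp hG
  have hE := hd.card_edgeFinset_le.trans_eq (Fintype.card_fin n)
  exact ⟨ℓ, exists_sum_tf_eq_prod_of_forall_isTSF hE fun F hF => isTSF_of_isLeveling hH hd hmono
    (by rwa [← SimpleGraph.coe_edgeFinset, Finset.coe_subset])⟩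

theorem stmt_19 {V : Type*} [Fintype V] [DecidableEq V] (n : ℕ)
    (hcard : Fintype.card V = n) (G : SimpleGraph V) :
    (∃ (ℓ : V ≃ Fin n) (a : Fin n → ℕ),
        ∑ m ∈ Finset.range (n + 1),
            (tf (G.map ℓ.toEmbedding) m : Polynomial ℤ) * X ^ (n - m)
          = ∏ i : Fin n, (X + C ((a i : ℤ)))) ↔
      G.IsAcyclic :=
  stmt_19_general n hcard G
end
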